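/- Let n be a positive integer, d ∈ {1,…,n}, and let G = H_2^n(d) be the graph on {0,1}^n with x, y adjacent iff their Hamming distance is at least d. Then the Lovász theta number θ(G) equals the maximum of ∑_{x∈{0,1}^n} f(x) over all functions f : {0,1}^n → ℝ satisfying: all Fourier coefficients f̂(z) ≥ 0, f(0) = 1, and f(x) = 0 whenever the Hamming weight |x| ≥ d. -/

import Mathlib

open Finset

/-- The real Fourier coefficient of `f : {0,1}^n → ℝ` at `z`:
`f̂(z) = 2^{-n} ∑_x f(x) (-1)^{z·x}`. -/
noncomputable def fourierCoeff16 (n : ℕ) (f : (Fin n → ZMod 2) → ℝ)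
    (z : Fin n → ZMod 2) : ℝ :=
  (2 : ℝ)⁻¹ ^ n * ∑ x : Fin n → ZMod 2, f x * (-1 : ℝ) ^ (∑ i, (z i).val * (x i).val)

/-- The Lovász theta number of `H_2^n(d)` (the graph on `{0,1}^n` with `x ~ y`
iff their Hamming distance is at least `d`), as the optimum of the standard
SDP over PSD matrices. -/
noncomputable def theta16 (n d : ℕ) : ℝ :=
  sSup {t : ℝ | ∃ X : Matrix (Fin n → ZMod 2) (Fin n → ZMod 2) ℝ,
    X.PosSemidef ∧ X.trace = 1 ∧
    (∀ x y, d ≤ hammingDist x y → X x y = 0) ∧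
    t = ∑ x : Fin n → ZMod 2, ∑ y : Fin n → ZMod 2, X x y}


noncomputable def chi16 {n : ℕ} (z x : Fin n → ZMod 2) : ℝ :=
  (-1 : ℝ) ^ (∑ i, (z i).val * (x i).val)

lemma negOnePow_mod {a b : ℕ} (h : a % 2 = b % 2) : (-1:ℝ)^a = (-1:ℝ)^b := by
  conv_lhs => rw [← Nat.div_add_mod a 2]
  conv_rhs => rw [← Nat.div_add_mod b 2]
  rw [pow_add, pow_add, pow_mul, pow_mul, h]
  norm_num

lemma chi16_mul {n : ℕ} (z x y : Fin n → ZMod 2) :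
    chi16 z x * chi16 z y = chi16 z (x + y) := by
  unfold chi16
  rw [← pow_add]
  apply negOnePow_mod
  rw [← Finset.sum_add_distrib,
    Finset.sum_nat_mod univ 2 (fun i => (z i).val * (x i).val + (z i).val * (y i).val),
    Finset.sum_nat_mod univ 2 (fun i => (z i).val * ((x + y) i).val)]
  congr 1
  apply Finset.sum_congr rfl
  intro i _
  show ((z i).val * (x i).val + (z i).val * (y i).val) % 2 = ((z i).val * ((x i) + (y i)).val) % 2
  generalize z i = a; generalize x i = b; generalize y i = c
  revert a b c; decide

lemma zmod2_sum : ∀ g : ZMod 2 → ℝ, ∑ a : ZMod 2, g a = g 0 + g 1 := by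
  have h : (Finset.univ : Finset (ZMod 2)) = {0, 1} := by decide
  intro g
  rw [h, Finset.sum_insert (by decide), Finset.sum_singleton]

lemma chi16_orth {n : ℕ} (v : Fin n → ZMod 2) :
    ∑ z : Fin n → ZMod 2, chi16 z v = if v = 0 then (2:ℝ)^n else 0 := by
  have h1 : ∀ z : Fin n → ZMod 2, chi16 z v = ∏ i, (-1:ℝ) ^ ((z i).val * (v i).val) := by
    intro z; unfold chi16; rw [← Finset.prod_pow_eq_pow_sum]
  simp_rw [h1]
  have key := Finset.prod_univ_sum (fun _ : Fin n => (univ : Finset (ZMod 2)))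
    (fun i a => (-1:ℝ)^(a.val * (v i).val))
  rw [Fintype.piFinset_univ] at key
  rw [← key]
  have h2 : ∀ i, (∑ a : ZMod 2, (-1:ℝ) ^ (a.val * (v i).val)) =
      if v i = 0 then 2 else 0 := by
    intro i
    rw [zmod2_sum]
    generalize v i = b
    have hb : b = 0 ∨ b = 1 := by revert b; decide
    rcases hb with hb | hb <;> subst hb <;> norm_num [ZMod.val_one]
  simp_rw [h2]
  by_cases hv : v = 0
  · simp [hv]
  · rw [if_neg hv]
    obtain ⟨i, hi⟩ : ∃ i, v i ≠ 0 := by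
      by_contra h; push_neg at h; exact hv (funext h)
    exact Finset.prod_eq_zero (Finset.mem_univ i) (by rw [if_neg hi])

lemma zmod2_add_self {n : ℕ} (x : Fin n → ZMod 2) : x + x = 0 := by
  funext i
  show x i + x i = 0
  generalize x i = a; revert a; decide

lemma hamming_eq16 {n : ℕ} (x y : Fin n → ZMod 2) :
    hammingDist x y = ∑ i, ((x i + y i)).val := by
  unfold hammingDist
  rw [Finset.card_filter]
  apply Finset.sum_congr rfl
  intro i _
  have key : ∀ a b : ZMod 2, (a+b).val = if a = b then 0 else 1 := by decide
  by_cases h : x i = y i <;> simp [h, key]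




lemma add_eq_zero_iff16 {n : ℕ} (x v : Fin n → ZMod 2) : x + v = 0 ↔ x = v := by
  constructor
  · intro h
    have := congrArg (· + v) h
    simpa [add_assoc, zmod2_add_self] using this
  · rintro rfl; exact zmod2_add_self _

lemma fourierCoeff16_eq {n : ℕ} (f : (Fin n → ZMod 2) → ℝ) (z : Fin n → ZMod 2) :
    fourierCoeff16 n f z = (2 : ℝ)⁻¹ ^ n * ∑ x, f x * chi16 z x := rfl

lemma fourier_inv16 {n : ℕ} (f : (Fin n → ZMod 2) → ℝ) (v : Fin n → ZMod 2) :
    ∑ z : Fin n → ZMod 2, fourierCoeff16 n f z * chi16 z v = f v := by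
  simp_rw [fourierCoeff16_eq]
  simp_rw [mul_assoc, Finset.sum_mul, mul_assoc, chi16_mul]
  simp_rw [Finset.mul_sum]
  rw [Finset.sum_comm]
  simp_rw [← Finset.mul_sum, chi16_orth, add_eq_zero_iff16]
  simp_rw [mul_ite, mul_zero]
  rw [Finset.sum_ite_eq' univ v (fun x => f x * (2:ℝ)^n)]
  rw [inv_pow]
  simp only [Finset.mem_univ, if_true]
  field_simp

lemma vec_add_cancel {n : ℕ} (x v : Fin n → ZMod 2) : x + (x + v) = v := by
  rw [← add_assoc, zmod2_add_self, zero_add]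

/-- `θ(H_2^n(d))` equals the maximum of `∑_x f(x)` over `f : {0,1}^n → ℝ` with
nonnegative Fourier coefficients, `f(0) = 1`, and `f(x) = 0` for `|x| ≥ d`. -/
theorem stmt_16 (n d : ℕ) (hn : 0 < n) (hd1 : 1 ≤ d) (hd2 : d ≤ n) :
    theta16 n d = sSup {t : ℝ | ∃ f : (Fin n → ZMod 2) → ℝ,
      (∀ z, 0 ≤ fourierCoeff16 n f z) ∧
      f 0 = 1 ∧
      (∀ x : Fin n → ZMod 2, d ≤ ∑ i, (x i).val → f x = 0) ∧
      t = ∑ x : Fin n → ZMod 2, f x} := by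
  rw [theta16]
  congr 1
  ext t
  constructor
  · rintro ⟨X, hPSD, htr, hzero, rfl⟩
    refine ⟨fun v => ∑ x, X x (x + v), ?_, ?_, ?_, ?_⟩
    · -- Fourier nonneg
      intro z
      have hre : ∀ x : Fin n → ZMod 2,
          ∑ v : Fin n → ZMod 2, X x (x + v) * chi16 z v
            = ∑ y : Fin n → ZMod 2, chi16 z x * X x y * chi16 z y := by
        intro x
        have := Equiv.sum_comp (Equiv.addLeft x)
          (fun y => X x y * (chi16 z x * chi16 z y))
        simp only [Equiv.coe_addLeft] at this
        calc ∑ v : Fin n → ZMod 2, X x (x + v) * chi16 z v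
            = ∑ v : Fin n → ZMod 2, X x (x + v) * (chi16 z x * chi16 z (x + v)) := by
              apply Finset.sum_congr rfl; intro v _
              rw [chi16_mul, vec_add_cancel]
          _ = ∑ y : Fin n → ZMod 2, X x y * (chi16 z x * chi16 z y) := this
          _ = ∑ y : Fin n → ZMod 2, chi16 z x * X x y * chi16 z y := by
              apply Finset.sum_congr rfl; intro y _; ring
      have hquad := hPSD.dotProduct_mulVec_nonneg (fun x => chi16 z x)
      rw [show (fourierCoeff16 n (fun v => ∑ x, X x (x + v)) z)
          = (2:ℝ)⁻¹^n * ∑ v : Fin n → ZMod 2, (∑ x, X x (x + v)) * chi16 z v from rfl]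
      apply mul_nonneg (by positivity)
      simp_rw [Finset.sum_mul]
      rw [Finset.sum_comm]
      simp_rw [hre]
      convert hquad using 1
      simp only [dotProduct, Matrix.mulVec, Pi.star_apply, star_trivial,
        Finset.mul_sum]
      apply Finset.sum_congr rfl; intro x _
      apply Finset.sum_congr rfl; intro y _
      ring
    · -- f 0 = 1
      simp only [add_zero]
      exact htr
    · -- vanishing
      intro v hv
      apply Finset.sum_eq_zero
      intro x _
      apply hzero
      rw [hamming_eq16]
      have : ∀ i, x i + (x + v) i = v i := fun i => congrFun (vec_add_cancel x v) i
      calc d ≤ ∑ i, (v i).val := hv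
        _ = ∑ i, (x i + (x + v) i).val := by
            apply Finset.sum_congr rfl; intro i _; rw [this]
    · -- sum equality
      have hsc : ∀ x : Fin n → ZMod 2, ∑ v : Fin n → ZMod 2, X x (x + v) = ∑ y, X x y := by
        intro x
        have h := Equiv.sum_comp (Equiv.addLeft x) (fun y => X x y)
        simpa using h
      calc ∑ x : Fin n → ZMod 2, ∑ y : Fin n → ZMod 2, X x y
          = ∑ x : Fin n → ZMod 2, ∑ v : Fin n → ZMod 2, X x (x + v) :=
            Finset.sum_congr rfl fun x _ => (hsc x).symm
        _ = ∑ v : Fin n → ZMod 2, ∑ x : Fin n → ZMod 2, X x (x + v) := Finset.sum_comm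
  · rintro ⟨f, hF, h0, hvan, rfl⟩
    set c := fourierCoeff16 n f with hc
    have key : ∀ x y : Fin n → ZMod 2,
        f (x + y) = ∑ z : Fin n → ZMod 2, c z * (chi16 z x * chi16 z y) := by
      intro x y
      rw [← fourier_inv16 f (x + y)]
      apply Finset.sum_congr rfl; intro z _
      rw [chi16_mul]
    refine ⟨Matrix.of (fun x y => (2:ℝ)⁻¹^n * f (x + y)),
      Matrix.posSemidef_iff_dotProduct_mulVec.mpr ⟨?_, ?_⟩, ?_, ?_, ?_⟩
    · -- Hermitian
      ext x y
      simp only [Matrix.conjTranspose_apply, Matrix.of_apply, star_trivial]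
      rw [add_comm]
    · -- quadratic form nonneg
      intro v
      have expand : dotProduct (star v)
            ((Matrix.of (fun x y => (2:ℝ)⁻¹^n * f (x + y))).mulVec v)
          = ∑ z : Fin n → ZMod 2, (2:ℝ)⁻¹^n * c z * (∑ x, v x * chi16 z x)^2 :=
        calc dotProduct (star v)
              ((Matrix.of (fun x y => (2:ℝ)⁻¹^n * f (x + y))).mulVec v)
            = ∑ x : Fin n → ZMod 2, ∑ y : Fin n → ZMod 2,
                v x * ((2:ℝ)⁻¹^n * f (x + y) * v y) := by
              simp only [dotProduct, Matrix.mulVec, Pi.star_apply, star_trivial,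
                Matrix.of_apply, Finset.mul_sum]
          _ = ∑ x : Fin n → ZMod 2, ∑ y : Fin n → ZMod 2, ∑ z : Fin n → ZMod 2,
                (2:ℝ)⁻¹^n * c z * ((v x * chi16 z x) * (v y * chi16 z y)) := by
              refine Finset.sum_congr rfl fun x _ => Finset.sum_congr rfl fun y _ => ?_
              rw [key x y, Finset.mul_sum, Finset.sum_mul, Finset.mul_sum]
              exact Finset.sum_congr rfl fun z _ => by ring
          _ = ∑ x : Fin n → ZMod 2, ∑ z : Fin n → ZMod 2, ∑ y : Fin n → ZMod 2,
                (2:ℝ)⁻¹^n * c z * ((v x * chi16 z x) * (v y * chi16 z y)) :=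
              Finset.sum_congr rfl fun x _ => Finset.sum_comm
          _ = ∑ z : Fin n → ZMod 2, ∑ x : Fin n → ZMod 2, ∑ y : Fin n → ZMod 2,
                (2:ℝ)⁻¹^n * c z * ((v x * chi16 z x) * (v y * chi16 z y)) :=
              Finset.sum_comm
          _ = ∑ z : Fin n → ZMod 2, (2:ℝ)⁻¹^n * c z * (∑ x, v x * chi16 z x)^2 := by
              refine Finset.sum_congr rfl fun z _ => ?_
              rw [sq, Finset.sum_mul_sum, Finset.mul_sum]
              refine Finset.sum_congr rfl fun x _ => ?_
              rw [Finset.mul_sum]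
      rw [expand]
      apply Finset.sum_nonneg
      intro z _
      have := hF z
      positivity
    · -- trace
      have : ∀ x : Fin n → ZMod 2, (Matrix.of (fun x y => (2:ℝ)⁻¹^n * f (x + y))) x x
          = (2:ℝ)⁻¹^n := by
        intro x
        simp only [Matrix.of_apply, zmod2_add_self, h0, mul_one]
      rw [Matrix.trace]
      simp only [Matrix.diag_apply, this, Finset.sum_const, Finset.card_univ,
        nsmul_eq_mul]
      rw [show (Fintype.card (Fin n → ZMod 2)) = 2^n by
        simp [Fintype.card_fun]]
      push_cast
      rw [inv_pow, mul_inv_cancel₀ (by positivity)]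
    · -- vanishing
      intro x y hxy
      simp only [Matrix.of_apply]
      rw [hvan (x + y) (by rw [hamming_eq16] at hxy; exact hxy), mul_zero]
    · -- sum
      have : ∀ x : Fin n → ZMod 2,
          ∑ y : Fin n → ZMod 2, (2:ℝ)⁻¹^n * f (x + y) = (2:ℝ)⁻¹^n * ∑ w, f w := by
        intro x
        rw [← Finset.mul_sum]
        congr 1
        exact Equiv.sum_comp (Equiv.addLeft x) f
      simp only [Matrix.of_apply, this, Finset.sum_const, Finset.card_univ, nsmul_eq_mul]
      rw [show (Fintype.card (Fin n → ZMod 2)) = 2^n by simp [Fintype.card_fun]]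
      push_cast
      rw [← mul_assoc, inv_pow, mul_inv_cancel₀ (by positivity), one_mul]
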